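/- arXiv:2203.11718 — 7 statements merged into one kernel-verified Lean document; each statement's English description precedes it below -/
import Mathlib

section
/- Let M : Fin n → Matrix (Fin n) (Fin n) ℝ be a family of symmetric real matrices and set P(α) := ∑_j α j • M j for α : Fin n → ℝ. Suppose d : (Fin n → ℝ) → ℝ and v : (Fin n → ℝ) → (Fin n → ℝ) are Fréchet differentiable at a point û and satisfy, for all α in some neighborhood of û, the eigenvalue equation P(α) v(α) = d(α) • v(α) and the normalization ‖v(α)‖₂ = 1 (Euclidean norm). Then for every index j, the partial derivative of d at û in the j-th coordinate direction equals v(û)ᵀ (M j) v(û) (first-variation formula for the eigenvalues of the stochastic Galerkin matrix, established in the proof of Lemma 2.1). -/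
/-
Instead of differentiating the vector eigenvalue equation, pair it with the fixed vector
`u = v(û)`: near `û` the scalar identity `⟪u, P(α) v(α)⟫ = d(α) ⟪u, v(α)⟫` holds, and its
derivative in direction `h` reads
`⟪u, P'(h) u⟫ + ⟪u, P(û) v'(h)⟫ = d'(h) ⟪u, u⟫ + d(û) ⟪u, v'(h)⟫`.
By symmetry of `P(û)`, `⟪u, P(û) w⟫ = ⟪P(û) u, w⟫ = d(û) ⟪u, w⟫`, so the terms containing
`v'` cancel, and `⟪u, u⟫ = 1` leaves `d'(h) = ⟪u, P'(h) u⟫` (Hellmann–Feynman).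
-/
open Matrix

open scoped RealInnerProductSpace in
theorem LinearMap.IsSymmetric.fderiv_eigenvalue_eq_inner {E F : Type*}
    [NormedAddCommGroup E] [NormedSpace ℝ E] [NormedAddCommGroup F] [InnerProductSpace ℝ F]
    {T : E → F →L[ℝ] F} {T' : E →L[ℝ] F →L[ℝ] F} {d : E → ℝ} {d' : E →L[ℝ] ℝ}
    {v : E → F} {v' : E →L[ℝ] F} {x : E}
    (hsymm : (T x : F →ₗ[ℝ] F).IsSymmetric)
    (hT : HasFDerivAt T T' x) (hd : HasFDerivAt d d' x) (hv : HasFDerivAt v v' x)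
    (heig : ∀ᶠ y in nhds x, T y (v y) = d y • v y) (hnorm : ‖v x‖ = 1) (h : E) :
    d' h = ⟪v x, T' h (v x)⟫ := by
  have hlhs := (hasFDerivAt_const (v x) x).inner ℝ (hT.clm_apply hv)
  have hrhs := (hasFDerivAt_const (v x) x).inner ℝ (hd.fun_smul hv)
  have heq : (fun y => ⟪v x, T y (v y)⟫) =ᶠ[nhds x] fun y => ⟪v x, d y • v y⟫ :=
    heig.mono fun y hy => congrArg _ hy
  have hderiv := congrArg (· h) <| hlhs.unique <| heq.hasFDerivAt_iff.mpr hrhs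
  have hunit : ⟪v x, v x⟫ = 1 := by rw [real_inner_self_eq_norm_sq, hnorm, one_pow]
  have hself (w : F) : ⟪v x, T x w⟫ = d x * ⟪v x, w⟫ := by
    rw [← real_inner_smul_left, ← heig.self_of_nhds]
    exact (hsymm (v x) w).symm
  simp only [ContinuousLinearMap.comp_apply, ContinuousLinearMap.prod_apply, _root_.zero_apply,
    _root_.add_apply, ContinuousLinearMap.flip_apply, fderivInnerCLM_apply, inner_zero_left,
    add_zero, _root_.smul_apply, ContinuousLinearMap.smulRight_apply, inner_add_right,
    real_inner_smul_right, hself, hunit] at hderiv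
  linarith

namespace Matrix

theorem IsSymm.sum_smul {ι κ : Type*} [Fintype ι] {M : ι → Matrix κ κ ℝ} (hM : ∀ j, (M j).IsSymm) (α : ι → ℝ) :
    (∑ j, α j • M j).IsSymm := by
  rw [IsSymm, transpose_sum]
  exact Finset.sum_congr rfl fun j _ => (hM j).smul (α j)

variable {ι κ : Type*} [Fintype ι] [Fintype κ] [DecidableEq κ]

theorem IsSymm.isSymmetric_toEuclideanCLM {A : Matrix κ κ ℝ} (hA : A.IsSymm) :
    (toEuclideanCLM (𝕜 := ℝ) A : EuclideanSpace ℝ κ →ₗ[ℝ] EuclideanSpace ℝ κ).IsSymmetric :=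
  isSymmetric_toEuclideanLin_iff.mpr (isHermitian_iff_isSymm.mpr hA)

noncomputable def euclideanCLMLinearCombination (M : ι → Matrix κ κ ℝ) :
    (ι → ℝ) →L[ℝ] EuclideanSpace ℝ κ →L[ℝ] EuclideanSpace ℝ κ :=
  ∑ j, (ContinuousLinearMap.proj (R := ℝ) (φ := fun _ : ι => ℝ) j).smulRight
    (toEuclideanCLM (𝕜 := ℝ) (M j))

theorem euclideanCLMLinearCombination_apply (M : ι → Matrix κ κ ℝ) (α : ι → ℝ) :
    euclideanCLMLinearCombination M α = toEuclideanCLM (𝕜 := ℝ) (∑ j, α j • M j) := by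
  simp [euclideanCLMLinearCombination, map_sum, map_smul]

theorem euclideanCLMLinearCombination_single [DecidableEq ι] (M : ι → Matrix κ κ ℝ) (j : ι) :
    euclideanCLMLinearCombination M (Pi.single j 1) = toEuclideanCLM (𝕜 := ℝ) (M j) := by
  simp [euclideanCLMLinearCombination_apply, Pi.single_apply]

end Matrix

theorem haar_sg_eigenvalue_first_variation_general {n : ℕ}
    (M : Fin n → Matrix (Fin n) (Fin n) ℝ)
    (hMsymm : ∀ j, (M j).IsSymm)
    (P : (Fin n → ℝ) → Matrix (Fin n) (Fin n) ℝ)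
    (hP : ∀ α, P α = ∑ j, α j • M j)
    (d : (Fin n → ℝ) → ℝ) (v : (Fin n → ℝ) → (Fin n → ℝ))
    (uh : Fin n → ℝ)
    (hd : DifferentiableAt ℝ d uh) (hv : DifferentiableAt ℝ v uh)
    (heig : ∀ᶠ α in nhds uh, (P α).mulVec (v α) = d α • v α)
    (hnorm : ∀ᶠ α in nhds uh, Real.sqrt (∑ i, (v α i) ^ 2) = 1) :
    ∀ j : Fin n, fderiv ℝ d uh (Pi.single j 1) = v uh ⬝ᵥ (M j).mulVec (v uh) := by
  intro j
  -- `Fin n → ℝ` carries the sup norm; the inner product lives on `EuclideanSpace ℝ (Fin n)`.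
  set T := euclideanCLMLinearCombination M
  have hsymm : (T uh : EuclideanSpace ℝ (Fin n) →ₗ[ℝ] _).IsSymmetric := by
    rw [euclideanCLMLinearCombination_apply]
    exact (IsSymm.sum_smul hMsymm uh).isSymmetric_toEuclideanCLM
  have hvL := (PiLp.continuousLinearEquiv 2 ℝ _).symm.hasFDerivAt.comp uh hv.hasFDerivAt
  have heigL : ∀ᶠ α in nhds uh, T α (WithLp.toLp 2 (v α)) = d α • WithLp.toLp 2 (v α) := by
    filter_upwards [heig] with α hα
    rw [euclideanCLMLinearCombination_apply, ← hP, toEuclideanCLM_toLp, hα, WithLp.toLp_smul]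
  have hnormL : ‖WithLp.toLp 2 (v uh)‖ = 1 := by
    simpa [EuclideanSpace.norm_eq] using hnorm.self_of_nhds
  have hfderiv := hsymm.fderiv_eigenvalue_eq_inner T.hasFDerivAt hd.hasFDerivAt hvL heigL hnormL
    (Pi.single j 1)
  rwa [euclideanCLMLinearCombination_single, toEuclideanCLM_toLp,
    EuclideanSpace.inner_toLp_toLp, star_trivial, dotProduct_comm] at hfderiv

/-- First-variation formula for the eigenvalues of the stochastic Galerkin matrix
(established in the proof of Lemma 2.1): if `P α = ∑ j, α j • M j` with symmetric `M j`,
and near `uh` the differentiable functions `d`, `v` satisfy the eigenvalue equation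
`P α *ᵥ v α = d α • v α` with Euclidean normalization `‖v α‖₂ = 1`, then
`∂_{uh_j} d(uh) = v(uh)ᵀ (M j) v(uh)`. -/
theorem haar_sg_eigenvalue_first_variation {n : ℕ} (hn : 1 ≤ n)
    (M : Fin n → Matrix (Fin n) (Fin n) ℝ)
    (hMsymm : ∀ j, (M j).IsSymm)
    (P : (Fin n → ℝ) → Matrix (Fin n) (Fin n) ℝ)
    (hP : ∀ α, P α = ∑ j, α j • M j)
    (d : (Fin n → ℝ) → ℝ) (v : (Fin n → ℝ) → (Fin n → ℝ))
    (uh : Fin n → ℝ)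
    (hd : DifferentiableAt ℝ d uh) (hv : DifferentiableAt ℝ v uh)
    (heig : ∀ᶠ α in nhds uh, (P α).mulVec (v α) = d α • v α)
    (hnorm : ∀ᶠ α in nhds uh, Real.sqrt (∑ i, (v α i) ^ 2) = 1) :
    ∀ j : Fin n, fderiv ℝ d uh (Pi.single j 1) = v uh ⬝ᵥ (M j).mulVec (v uh) :=
  haar_sg_eigenvalue_first_variation_general M hMsymm P hP d v uh hd hv heig hnorm
end

section
/- (Lemma 3.1 (i)) Under the Haar-type hypotheses, the Galerkin product is represented multiplicatively: P(P(û) ŵ) = P(û) · P(ŵ) for all û, ŵ : Fin n → ℝ. -/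
open Matrix

lemma isDiag_mul_comm' {n : ℕ} {A B : Matrix (Fin n) (Fin n) ℝ}
    (hA : A.IsDiag) (hB : B.IsDiag) : A * B = B * A := by
  rw [← hA.diagonal_diag, ← hB.diagonal_diag, diagonal_mul_diagonal,
    diagonal_mul_diagonal]
  exact congrArg diagonal (funext fun i => mul_comm _ _)

/-- Lemma 3.1 (i): under the Haar-type hypotheses (there is an orthogonal `H` such that
`Hᵀ (M k) H` is diagonal for all `k`), the Galerkin product is represented
multiplicatively: `P (P uh *ᵥ wh) = P uh * P wh`. -/
theorem haar_sg_product_multiplicative {n : ℕ} [NeZero n]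
    (M : Fin n → Matrix (Fin n) (Fin n) ℝ)
    (hMsymm : ∀ k, (M k).IsSymm) (hM0 : M 0 = 1)
    (P : (Fin n → ℝ) → Matrix (Fin n) (Fin n) ℝ)
    (hP : ∀ uh, P uh = ∑ k, uh k • M k)
    (hsym : ∀ uh wh : Fin n → ℝ, (P uh).mulVec wh = (P wh).mulVec uh)
    (e0 : Fin n → ℝ) (he0 : e0 = Pi.single 0 1)
    (H : Matrix (Fin n) (Fin n) ℝ) (hH : Hᵀ * H = 1)
    (hdiag : ∀ k, (Hᵀ * M k * H).IsDiag)
    (uh wh : Fin n → ℝ) :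
    P ((P uh).mulVec wh) = P uh * P wh := by
  have hHHt : H * Hᵀ = 1 := mul_eq_one_comm.mp hH
  set D : Fin n → Matrix (Fin n) (Fin n) ℝ := fun k => Hᵀ * M k * H with hD
  have hM : ∀ k, M k = H * D k * Hᵀ := by
    intro k
    calc M k = (H * Hᵀ) * M k * (H * Hᵀ) := by rw [hHHt]; simp
    _ = H * D k * Hᵀ := by simp only [hD, Matrix.mul_assoc]
  have hPform : ∀ a : Fin n → ℝ, P a = H * (∑ k, a k • D k) * Hᵀ := by
    intro a
    rw [hP, Matrix.mul_sum, Matrix.sum_mul]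
    refine Finset.sum_congr rfl fun k _ => ?_
    rw [hM k]
    simp [Matrix.mul_smul, Matrix.smul_mul]
  have hDa : ∀ a : Fin n → ℝ, (∑ k, a k • D k).IsDiag := by
    intro a i j hij
    rw [Matrix.sum_apply]
    refine Finset.sum_eq_zero fun k _ => ?_
    simp only [hD, Matrix.smul_apply]
    rw [hdiag k hij, smul_zero]
  have hcomm : ∀ a b : Fin n → ℝ, P a * P b = P b * P a := by
    intro a b
    rw [hPform a, hPform b]
    have h1 : ∀ x y : Matrix (Fin n) (Fin n) ℝ,
        H * x * Hᵀ * (H * y * Hᵀ) = H * (x * y) * Hᵀ := by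
      intro x y
      calc H * x * Hᵀ * (H * y * Hᵀ) = H * x * (Hᵀ * H) * y * Hᵀ := by
            simp only [Matrix.mul_assoc]
        _ = H * (x * y) * Hᵀ := by rw [hH]; simp [Matrix.mul_assoc]
    rw [h1, h1, isDiag_mul_comm' (hDa a) (hDa b)]
  have key : ∀ x : Fin n → ℝ,
      (P ((P uh).mulVec wh)).mulVec x = (P uh * P wh).mulVec x := by
    intro x
    calc (P ((P uh).mulVec wh)).mulVec x = (P x).mulVec ((P uh).mulVec wh) :=
          hsym _ _
      _ = (P x * P uh).mulVec wh := by rw [Matrix.mulVec_mulVec]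
      _ = (P uh * P x).mulVec wh := by rw [hcomm]
      _ = (P uh).mulVec ((P x).mulVec wh) := by rw [Matrix.mulVec_mulVec]
      _ = (P uh).mulVec ((P wh).mulVec x) := by rw [hsym x wh]
      _ = (P uh * P wh).mulVec x := by rw [Matrix.mulVec_mulVec]
  ext i j
  have := congrFun (key (Pi.single j 1)) i
  simpa [Matrix.mulVec_single] using this
end

section
/- Under the Haar-type hypotheses, for every diagonal matrix Λ ∈ Matrix (Fin n) (Fin n) ℝ one has P(H Λ Hᵀ e₀) = H Λ Hᵀ; equivalently, the linear map û ↦ D(û) := Hᵀ P(û) H is a bijection from Fin n → ℝ onto the space of diagonal n×n real matrices (key structural fact underlying Lemma 3.1 and Theorem 3.2). -/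
open Matrix

/-!
Since `P(e₀) = 1`, the symmetry of the Galerkin product gives `P(û) e₀ = û`, so `û ↦ P(û)` is
injective, and hence so is its conjugate `D(û) = Hᵀ P(û) H` (`H` is orthogonal). By hypothesis `D`
takes values in the diagonal matrices, which form an `n`-dimensional space, so the injective linear
map `D` is onto it. Finally `P(H Λ Hᵀ e₀) = H Λ Hᵀ` because `H Λ Hᵀ = P(û)` for some `û`, and then
`H Λ Hᵀ e₀ = û`.
-/

theorem Matrix.isDiag_transpose_mul_linearCombination_mul {R ι κ : Type*} [CommSemiring R]
    [Fintype ι] {M : ι → Matrix ι ι R} {H : Matrix ι κ R} (hM : ∀ k, (Hᵀ * M k * H).IsDiag)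
    (u : ι → R) : (Hᵀ * Fintype.linearCombination R M u * H).IsDiag := by
  rw [Fintype.linearCombination_apply, Matrix.mul_sum, Matrix.sum_mul]
  exact Finset.sum_induction _ IsDiag (fun _ _ => IsDiag.add) isDiag_zero
    fun k _ => by simpa only [Matrix.mul_smul, Matrix.smul_mul] using (hM k).smul (u k)

theorem LinearMap.bijOn_isDiag_of_injective {K ι : Type*} [Field K] [Fintype ι] [DecidableEq ι]
    (D : (ι → K) →ₗ[K] Matrix ι ι K) (hD : Function.Injective D) (hdiag : ∀ u, (D u).IsDiag) :
    Set.BijOn D Set.univ {Λ | Λ.IsDiag} := by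
  have hdiag_inj : Function.Injective (diagLinearMap ι K K ∘ₗ D) := fun u v huv => hD <| by
    rw [← (hdiag u).diagonal_diag, ← (hdiag v).diagonal_diag]
    exact congrArg diagonal huv
  refine ⟨fun u _ => hdiag u, hD.injOn, fun Λ hΛ => ?_⟩
  obtain ⟨u, hu⟩ := LinearMap.injective_iff_surjective.mp hdiag_inj Λ.diag
  refine ⟨u, trivial, ?_⟩
  rw [← (hdiag u).diagonal_diag, ← hΛ.diagonal_diag]
  exact congrArg diagonal hu

theorem haar_sg_diag_correspondence_general {n : ℕ} [NeZero n]
    (M : Fin n → Matrix (Fin n) (Fin n) ℝ)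
    (hM0 : M 0 = 1)
    (P : (Fin n → ℝ) → Matrix (Fin n) (Fin n) ℝ)
    (hP : ∀ uh, P uh = ∑ k, uh k • M k)
    (hsym : ∀ uh wh : Fin n → ℝ, (P uh).mulVec wh = (P wh).mulVec uh)
    (e0 : Fin n → ℝ) (he0 : e0 = Pi.single 0 1)
    (H : Matrix (Fin n) (Fin n) ℝ) (hH : Hᵀ * H = 1)
    (hdiag : ∀ k, (Hᵀ * M k * H).IsDiag) :
    (∀ Λ : Matrix (Fin n) (Fin n) ℝ, Λ.IsDiag →
        P ((H * Λ * Hᵀ).mulVec e0) = H * Λ * Hᵀ) ∧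
      Set.BijOn (fun uh : Fin n → ℝ => Hᵀ * P uh * H) Set.univ
        {Λ : Matrix (Fin n) (Fin n) ℝ | Λ.IsDiag} := by
  have hP_eq : P = Fintype.linearCombination ℝ M :=
    funext fun uh => (hP uh).trans (Fintype.linearCombination_apply ℝ M uh).symm
  have hPe0 : P e0 = 1 := by simp [hP_eq, he0, hM0]
  have hP_mulVec_e0 (uh : Fin n → ℝ) : P uh *ᵥ e0 = uh := by rw [hsym, hPe0, one_mulVec]
  have hunconj (A : Matrix (Fin n) (Fin n) ℝ) : H * (Hᵀ * A * H) * Hᵀ = A := by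
    rw [← Matrix.mul_assoc, ← Matrix.mul_assoc, mul_eq_one_comm.mp hH, Matrix.one_mul,
      Matrix.mul_assoc, mul_eq_one_comm.mp hH, Matrix.mul_one]
  let D := LinearMap.mulRight ℝ H ∘ₗ LinearMap.mulLeft ℝ Hᵀ ∘ₗ Fintype.linearCombination ℝ M
  have hD : ⇑D = fun uh => Hᵀ * P uh * H := by rw [hP_eq]; rfl
  have hD_inj : Function.Injective D := fun x y hxy => by
    simp only [hD] at hxy
    rw [← hP_mulVec_e0 x, ← hP_mulVec_e0 y, ← hunconj (P x), ← hunconj (P y), hxy]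
  have hbij := D.bijOn_isDiag_of_injective hD_inj
    (isDiag_transpose_mul_linearCombination_mul hdiag)
  refine ⟨fun Λ hΛ => ?_, hD ▸ hbij⟩
  obtain ⟨uh, -, rfl⟩ := hbij.surjOn hΛ
  rw [hD, hunconj, hP_mulVec_e0]

/-- Key structural fact underlying Lemma 3.1 and Theorem 3.2: under the Haar-type
hypotheses, for every diagonal matrix `Λ` one has `P (H Λ Hᵀ e₀) = H Λ Hᵀ`;
equivalently, the linear map `uh ↦ D(uh) := Hᵀ P(uh) H` is a bijection from
`Fin n → ℝ` onto the space of diagonal `n×n` real matrices. -/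
theorem haar_sg_diag_correspondence {n : ℕ} [NeZero n]
    (M : Fin n → Matrix (Fin n) (Fin n) ℝ)
    (hMsymm : ∀ k, (M k).IsSymm) (hM0 : M 0 = 1)
    (P : (Fin n → ℝ) → Matrix (Fin n) (Fin n) ℝ)
    (hP : ∀ uh, P uh = ∑ k, uh k • M k)
    (hsym : ∀ uh wh : Fin n → ℝ, (P uh).mulVec wh = (P wh).mulVec uh)
    (e0 : Fin n → ℝ) (he0 : e0 = Pi.single 0 1)
    (H : Matrix (Fin n) (Fin n) ℝ) (hH : Hᵀ * H = 1)
    (hdiag : ∀ k, (Hᵀ * M k * H).IsDiag) :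
    (∀ Λ : Matrix (Fin n) (Fin n) ℝ, Λ.IsDiag →
        P ((H * Λ * Hᵀ).mulVec e0) = H * Λ * Hᵀ) ∧
      Set.BijOn (fun uh : Fin n → ℝ => Hᵀ * P uh * H) Set.univ
        {Λ : Matrix (Fin n) (Fin n) ℝ | Λ.IsDiag} :=
  haar_sg_diag_correspondence_general M hM0 P hP hsym e0 he0 H hH hdiag
end

section
/- (Equation (5) in the proof of Lemma 3.1) Under the Haar-type hypotheses, for every integer m ≥ 1 and every û : Fin n → ℝ, setting ρ̂ := (P(û))^m e₀, one has P(ρ̂) = (P(û))^m, and consequently D(ρ̂) = (D(û))^m. -/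
open Matrix

/-- Equation (5) in the proof of Lemma 3.1: under the Haar-type hypotheses,
for every `m ≥ 1` and `uh`, setting `ρ := (P uh)^m e₀`, one has
`P ρ = (P uh)^m` and consequently `D ρ = (D uh)^m` with `D x := Hᵀ P(x) H`. -/
theorem haar_sg_power_representation {n : ℕ} [NeZero n]
    (M : Fin n → Matrix (Fin n) (Fin n) ℝ)
    (hMsymm : ∀ k, (M k).IsSymm) (hM0 : M 0 = 1)
    (P : (Fin n → ℝ) → Matrix (Fin n) (Fin n) ℝ)
    (hP : ∀ uh, P uh = ∑ k, uh k • M k)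
    (hsym : ∀ uh wh : Fin n → ℝ, (P uh).mulVec wh = (P wh).mulVec uh)
    (e0 : Fin n → ℝ) (he0 : e0 = Pi.single 0 1)
    (H : Matrix (Fin n) (Fin n) ℝ) (hH : Hᵀ * H = 1)
    (hdiag : ∀ k, (Hᵀ * M k * H).IsDiag)
    (m : ℕ) (hm : 1 ≤ m) (uh : Fin n → ℝ)
    (ρ : Fin n → ℝ) (hρ : ρ = (P uh ^ m).mulVec e0) :
    P ρ = P uh ^ m ∧ Hᵀ * P ρ * H = (Hᵀ * P uh * H) ^ m := by
  have hHH : H * Hᵀ = 1 := mul_eq_one_comm.mp hH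
  -- P u is symmetric
  have hPsym : ∀ u, (P u)ᵀ = P u := by
    intro u
    rw [hP]
    rw [transpose_sum]
    refine Finset.sum_congr rfl fun k _ => ?_
    rw [transpose_smul, (hMsymm k).eq]
  -- P e0 = 1
  have hPe0 : P e0 = 1 := by
    rw [hP, he0]
    rw [Finset.sum_eq_single 0]
    · simp [hM0]
    · intro k _ hk; simp [Pi.single_apply, hk]
    · simp
  have hPv0 : ∀ u, (P u).mulVec e0 = u := by
    intro u; rw [hsym, hPe0, one_mulVec]
  -- D u := Hᵀ * P u * H is diagonal
  have hDdiag : ∀ u, (Hᵀ * P u * H).IsDiag := by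
    intro u i j hij
    rw [hP, Finset.mul_sum, Finset.sum_mul, Matrix.sum_apply]
    refine Finset.sum_eq_zero fun k _ => ?_
    rw [Matrix.mul_smul, Matrix.smul_mul, Matrix.smul_apply, hdiag k hij, smul_zero]
  have hPH : ∀ u, P u * H = H * (Hᵀ * P u * H) := by
    intro u
    calc P u * H = (H * Hᵀ) * (P u * H) := by rw [hHH, one_mul]
    _ = H * (Hᵀ * P u * H) := by noncomm_ring
  -- columns of H are eigenvectors: (P u) *ᵥ (Hᵀ i) = D u i i • Hᵀ i
  have hcol : ∀ u i, (P u).mulVec (Hᵀ i) = (Hᵀ * P u * H) i i • (Hᵀ i) := by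
    intro u i
    funext a
    have h1 : (P u).mulVec (Hᵀ i) a = (P u * H) a i := by
      simp [mulVec, mul_apply, dotProduct, transpose_apply]
    rw [h1, hPH u, mul_apply, Finset.sum_eq_single i]
    · simp [transpose_apply, mul_comm]
    · intro b _ hb
      rw [hDdiag u hb, mul_zero]
    · simp
  -- columns normalized
  have hnorm : ∀ i, (Hᵀ i) ⬝ᵥ (Hᵀ i) = 1 := by
    intro i
    have : (Hᵀ * H) i i = 1 := by rw [hH]; simp
    rw [← this, mul_apply]
    simp [dotProduct, transpose_apply]
  -- eigenvalue as quadratic form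
  have hquad : ∀ u i, (Hᵀ i) ⬝ᵥ (P u).mulVec (Hᵀ i) = (Hᵀ * P u * H) i i := by
    intro u i
    rw [hcol, dotProduct_smul, hnorm, smul_eq_mul, mul_one]
  -- symmetric dot product move
  have hmove : ∀ u (v w : Fin n → ℝ), v ⬝ᵥ (P u).mulVec w = ((P u).mulVec v) ⬝ᵥ w := by
    intro u v w
    rw [dotProduct_mulVec, ← mulVec_transpose, hPsym]
  -- the eigenvalues are multiplicative over the Galerkin product
  have hlam : ∀ u w i, (Hᵀ * P ((P u).mulVec w) * H) i i
      = (Hᵀ * P u * H) i i * (Hᵀ * P w * H) i i := by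
    intro u w i
    have e1 : (Hᵀ * P ((P u).mulVec w) * H) i i
        = (Hᵀ * P (Hᵀ i) * H) i i * ((Hᵀ i) ⬝ᵥ (P u).mulVec w) := by
      rw [← hquad, hsym, hmove, hcol, smul_dotProduct, smul_eq_mul]
    have e2 : (Hᵀ * P w * H) i i = (Hᵀ * P (Hᵀ i) * H) i i * ((Hᵀ i) ⬝ᵥ w) := by
      rw [← hquad, hsym, hmove, hcol, smul_dotProduct, smul_eq_mul]
    have e3 : (Hᵀ i) ⬝ᵥ (P u).mulVec w = (Hᵀ * P u * H) i i * ((Hᵀ i) ⬝ᵥ w) := by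
      rw [hmove, hcol, smul_dotProduct, smul_eq_mul]
    rw [e1, e3, e2]; ring
  -- entries of the product of two of these diagonal matrices
  have hprod : ∀ u w i j, ((Hᵀ * P u * H) * (Hᵀ * P w * H)) i j
      = (Hᵀ * P u * H) i j * (Hᵀ * P w * H) j j := by
    intro u w i j
    rw [mul_apply, Finset.sum_eq_single j]
    · intro b _ hb; rw [hDdiag w hb, mul_zero]
    · simp
  -- D (u * w) = D u * D w
  have hDmul : ∀ u w, Hᵀ * P ((P u).mulVec w) * H = (Hᵀ * P u * H) * (Hᵀ * P w * H) := by
    intro u w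
    apply Matrix.ext
    intro i j
    rw [hprod]
    by_cases hij : i = j
    · subst hij; exact hlam u w i
    · rw [hDdiag _ hij, hDdiag _ hij, zero_mul]
  -- recover P x from D x
  have hPD : ∀ u, P u = H * (Hᵀ * P u * H) * Hᵀ := by
    intro u
    calc P u = (H * Hᵀ) * P u * (H * Hᵀ) := by rw [hHH]; noncomm_ring
    _ = H * (Hᵀ * P u * H) * Hᵀ := by noncomm_ring
  -- P (u * w) = P u * P w
  have hPmul : ∀ u w, P ((P u).mulVec w) = P u * P w := by
    intro u w
    rw [hPD ((P u).mulVec w), hDmul]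
    calc H * ((Hᵀ * P u * H) * (Hᵀ * P w * H)) * Hᵀ
        = (H * (Hᵀ * P u * H)) * ((Hᵀ * P w * H) * Hᵀ) := by noncomm_ring
      _ = (H * (Hᵀ * P u * H)) * (Hᵀ * H) * ((Hᵀ * P w * H) * Hᵀ) := by
          rw [hH, mul_one]
      _ = (H * (Hᵀ * P u * H) * Hᵀ) * (H * (Hᵀ * P w * H) * Hᵀ) := by noncomm_ring
      _ = P u * P w := by rw [← hPD, ← hPD]
  -- main induction (holds for all m, including 0)
  have key : ∀ N : ℕ, P ((P uh ^ N).mulVec e0) = P uh ^ N := by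
    intro N
    induction N with
    | zero => rw [pow_zero, one_mulVec, hPe0]
    | succ N ih =>
      have h2 : (P uh ^ (N + 1)).mulVec e0 = (P uh).mulVec ((P uh ^ N).mulVec e0) := by
        rw [mulVec_mulVec, ← pow_succ']
      rw [h2, hPmul, ih, pow_succ']
  have h1 : P ρ = P uh ^ m := by rw [hρ]; exact key m
  refine ⟨h1, ?_⟩
  -- conjugation of a power
  have hconj : ∀ N : ℕ, Hᵀ * P uh ^ N * H = (Hᵀ * P uh * H) ^ N := by
    intro N
    induction N with
    | zero => simp [hH]
    | succ N ih =>
      rw [pow_succ, pow_succ, ← ih]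
      calc Hᵀ * (P uh ^ N * P uh) * H
          = Hᵀ * P uh ^ N * (H * Hᵀ) * P uh * H := by rw [hHH]; noncomm_ring
        _ = Hᵀ * P uh ^ N * H * (Hᵀ * P uh * H) := by noncomm_ring
  rw [h1, hconj]
end

section
/- (Lemma 3.1 (ii)) Under the Haar-type hypotheses, for every integer m ≥ 1 the mapping T_m : H⁺₀ → H⁺₀ defined by T_m(û) := (P(û))^m e₀ is well defined (maps H⁺₀ into H⁺₀) and bijective, where H⁺₀ := {û : Fin n → ℝ | P(û) is positive semidefinite}. -/
open Matrix

/-- Lemma 3.1 (ii): under the Haar-type hypotheses, for every `m ≥ 1` the map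
`T_m(uh) := (P uh)^m e₀` maps `H⁺₀ := {uh | P uh is positive semidefinite}`
into itself and is a bijection of `H⁺₀` onto itself. -/
theorem haar_sg_Tm_bijective {n : ℕ} [NeZero n]
    (M : Fin n → Matrix (Fin n) (Fin n) ℝ)
    (hMsymm : ∀ k, (M k).IsSymm) (hM0 : M 0 = 1)
    (P : (Fin n → ℝ) → Matrix (Fin n) (Fin n) ℝ)
    (hP : ∀ uh, P uh = ∑ k, uh k • M k)
    (hsym : ∀ uh wh : Fin n → ℝ, (P uh).mulVec wh = (P wh).mulVec uh)
    (e0 : Fin n → ℝ) (he0 : e0 = Pi.single 0 1)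
    (H : Matrix (Fin n) (Fin n) ℝ) (hH : Hᵀ * H = 1)
    (hdiag : ∀ k, (Hᵀ * M k * H).IsDiag)
    (m : ℕ) (hm : 1 ≤ m) :
    Set.BijOn (fun uh : Fin n → ℝ => (P uh ^ m).mulVec e0)
      {uh : Fin n → ℝ | (P uh).PosSemidef}
      {uh : Fin n → ℝ | (P uh).PosSemidef} := by
  classical
  have hm0 : m ≠ 0 := Nat.one_le_iff_ne_zero.mp hm
  have hHH : H * Hᵀ = 1 := mul_eq_one_comm.mp hH
  have hHconj : Hᴴ = Hᵀ := by ext i j; simp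
  have hHtconj : (Hᵀ)ᴴ = H := by ext i j; simp
  set d : (Fin n → ℝ) → (Fin n → ℝ) := fun u i => (Hᵀ * P u * H) i i with hd
  have hexp : ∀ u, Hᵀ * P u * H = ∑ k, u k • (Hᵀ * M k * H) := by
    intro u
    rw [hP]
    simp [Matrix.mul_sum, Matrix.sum_mul, Matrix.mul_smul, Matrix.smul_mul]
  have hPdiag : ∀ u, Hᵀ * P u * H = Matrix.diagonal (d u) := by
    intro u
    have hisd : (Hᵀ * P u * H).IsDiag := by
      intro i j hij
      rw [hexp]
      simp only [Matrix.sum_apply, Matrix.smul_apply, smul_eq_mul]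
      exact Finset.sum_eq_zero fun k _ => by rw [hdiag k hij, mul_zero]
    exact hisd.diagonal_diag.symm
  have hPform : ∀ u, P u = H * Matrix.diagonal (d u) * Hᵀ := by
    intro u
    rw [← hPdiag u]
    symm
    calc H * (Hᵀ * P u * H) * Hᵀ = (H * Hᵀ) * P u * (H * Hᵀ) := by
          simp only [Matrix.mul_assoc]
      _ = P u := by rw [hHH, Matrix.one_mul, Matrix.mul_one]
  have hPe0 : P e0 = 1 := by
    rw [hP, he0]
    simp [Pi.single_apply, ite_smul, hM0]
  have hmv : ∀ u, (P u).mulVec e0 = u := by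
    intro u
    rw [hsym u e0, hPe0, Matrix.one_mulVec]
  have hdinj : Function.Injective d := by
    intro u v h
    have hPuv : P u = P v := by rw [hPform u, hPform v, h]
    rw [← hmv u, ← hmv v, hPuv]
  -- d is linear
  have hPadd : ∀ u v, P (u + v) = P u + P v := by
    intro u v
    simp [hP, add_smul, Finset.sum_add_distrib]
  have hPsmul : ∀ (c : ℝ) u, P (c • u) = c • P u := by
    intro c u
    simp [hP, smul_smul, Finset.smul_sum]
  let Dlin : (Fin n → ℝ) →ₗ[ℝ] (Fin n → ℝ) :=
    { toFun := d
      map_add' := by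
        intro u v
        funext i
        simp [hd, hPadd, Matrix.add_mul, Matrix.mul_add]
      map_smul' := by
        intro c u
        funext i
        simp [hd, hPsmul, Matrix.mul_smul, Matrix.smul_mul] }
  have hdsurj : Function.Surjective d :=
    (LinearMap.injective_iff_surjective (f := Dlin)).mp hdinj
  have hconjpow : ∀ (A : Matrix (Fin n) (Fin n) ℝ) (k : ℕ),
      (H * A * Hᵀ) ^ k = H * A ^ k * Hᵀ := by
    intro A k
    induction k with
    | zero => simp [hHH]
    | succ k ih =>
      rw [pow_succ, pow_succ, ih]
      calc H * A ^ k * Hᵀ * (H * A * Hᵀ)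
          = H * A ^ k * (Hᵀ * H) * A * Hᵀ := by simp only [Matrix.mul_assoc]
        _ = H * (A ^ k * A) * Hᵀ := by rw [hH, Matrix.mul_one]; simp only [Matrix.mul_assoc]
  have hPpow : ∀ u, P u ^ m = H * Matrix.diagonal (fun i => d u i ^ m) * Hᵀ := by
    intro u
    rw [hPform u, hconjpow, Matrix.diagonal_pow]
    rfl
  have hTd : ∀ u, d ((P u ^ m).mulVec e0) = fun i => d u i ^ m := by
    intro u
    obtain ⟨w, hw⟩ := hdsurj (fun i => d u i ^ m)
    have hPw : P w = P u ^ m := by rw [hPform w, hw, hPpow]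
    have him : (P u ^ m).mulVec e0 = w := by rw [← hPw, hmv]
    rw [him, hw]
  have hchar : ∀ u, (P u).PosSemidef ↔ ∀ i, 0 ≤ d u i := by
    intro u
    constructor
    · intro h
      have h2 := h.mul_mul_conjTranspose_same Hᵀ
      rw [hHtconj, hPdiag u] at h2
      exact (Matrix.posSemidef_diagonal_iff).mp h2
    · intro h
      have h2 : (Matrix.diagonal (d u)).PosSemidef :=
        (Matrix.posSemidef_diagonal_iff).mpr h
      have h3 := h2.mul_mul_conjTranspose_same H
      rwa [hHconj, ← hPform u] at h3
  refine ⟨?_, ?_, ?_⟩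
  · intro u hu
    simp only [Set.mem_setOf_eq] at hu ⊢
    rw [hchar, hTd]
    exact fun i => pow_nonneg ((hchar u).mp hu i) m
  · intro u hu v hv h
    simp only [Set.mem_setOf_eq] at hu hv
    have hduv : d u = d v := by
      have h1 := congrArg d h
      rw [hTd, hTd] at h1
      funext i
      have h2 : d u i ^ m = d v i ^ m := congrFun h1 i
      exact (pow_left_strictMonoOn₀ hm0).injOn ((hchar u).mp hu i) ((hchar v).mp hv i) h2
    exact hdinj hduv
  · intro w hw
    simp only [Set.mem_setOf_eq] at hw
    obtain ⟨u, hu⟩ := hdsurj (fun i => (d w i) ^ ((m : ℝ)⁻¹))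
    have hc : ∀ i, d u i ^ m = d w i := by
      intro i
      rw [hu]
      exact Real.rpow_inv_natCast_pow ((hchar w).mp hw i) hm0
    refine ⟨u, ?_, ?_⟩
    · simp only [Set.mem_setOf_eq]
      rw [hchar]
      intro i
      rw [hu]
      exact Real.rpow_nonneg ((hchar w).mp hw i) _
    · apply hdinj
      rw [hTd]
      funext i
      exact hc i
end

section
/- (Equation (6) in the proof of Lemma 3.1: closed-form n-th root) Under the Haar-type hypotheses, let m ≥ 1 be an integer and let ρ̂ ∈ H⁺₀, so that all diagonal entries of D(ρ̂) are nonnegative. Define û := H · D(ρ̂)^{1/m} · Hᵀ e₀, where D(ρ̂)^{1/m} is the diagonal matrix whose entries are the (real, nonnegative) m-th roots of the diagonal entries of D(ρ̂). Then û ∈ H⁺₀ and (P(û))^m e₀ = ρ̂; that is, û is the preimage of ρ̂ under the map T_m(û) = (P(û))^m e₀. -/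
open Matrix

/-!
The Galerkin matrices `P(û)` are simultaneously diagonalised by `H`, and `û ↦ diag (Hᵀ P(û) H)`
is linear and injective, because `û = P(û) e₀` is recovered from `P(û)`. By dimension count it is
onto, so every matrix `H · diag(λ) · Hᵀ` is a Galerkin matrix `P(v̂)`, and then necessarily
`v̂ = P(v̂) e₀ = H · diag(λ) · Hᵀ e₀`. Taking `λ` the `m`-th roots of the (nonnegative) eigenvalues
of `P(ρ̂)`, the vector `û` of the statement has `P(û) = H · D(ρ̂)^{1/m} · Hᵀ`, which is positive
semidefinite and whose `m`-th power is `P(ρ̂)`.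
-/

namespace Matrix

section Conjugation

variable {ι R : Type*} [Fintype ι] [DecidableEq ι] [CommRing R] {G H : Matrix ι ι R}

theorem mul_conj_mul_eq_self_of_mul_eq_one (hGH : G * H = 1) (A : Matrix ι ι R) :
    H * (G * A * H) * G = A := by
  have hHG : H * G = 1 := mul_eq_one_comm.mp hGH
  simp only [Matrix.mul_assoc, hHG, Matrix.mul_one]
  rw [← Matrix.mul_assoc, hHG, Matrix.one_mul]

theorem conj_pow_of_mul_eq_one (hGH : G * H = 1) (A : Matrix ι ι R) (k : ℕ) :
    (H * A * G) ^ k = H * A ^ k * G :=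
  Units.conj_pow ⟨H, G, mul_eq_one_comm.mp hGH, hGH⟩ A k

end Conjugation

theorem isDiag_conj_linearCombination {ι κ R : Type*} [Fintype ι] [Fintype κ] [CommSemiring R]
    {G H : Matrix ι ι R} (M : κ → Matrix ι ι R)
    (hM : ∀ k, (G * M k * H).IsDiag) (u : κ → R) :
    (G * Fintype.linearCombination R M u * H).IsDiag := by
  intro i j hij
  simp [Fintype.linearCombination_apply, Finset.mul_sum, Finset.sum_mul, Matrix.sum_apply,
    (hM _) hij]

theorem exists_apply_eq_conj_diagonal {ι K : Type*} [Fintype ι] [DecidableEq ι] [Field K]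
    (P : (ι → K) →ₗ[K] Matrix ι ι K) (e : ι → K) (hPe : ∀ u, P u *ᵥ e = u)
    {G H : Matrix ι ι K} (hGH : G * H = 1) (hdiag : ∀ u, (G * P u * H).IsDiag) (f : ι → K) :
    ∃ u, P u = H * diagonal f * G := by
  let L : (ι → K) →ₗ[K] (ι → K) :=
    diagLinearMap ι K K ∘ₗ LinearMap.mulRight K H ∘ₗ LinearMap.mulLeft K G ∘ₗ P
  have hL : ∀ u, diagonal (L u) = G * P u * H := fun u =>
    (isDiag_iff_diagonal_diag _).mp (hdiag u)
  have hL_inj : Function.Injective L := by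
    rw [← LinearMap.ker_eq_bot, LinearMap.ker_eq_bot']
    intro u hu
    have hPu : P u = 0 := by
      rw [← mul_conj_mul_eq_self_of_mul_eq_one hGH (P u), ← hL, hu]
      simp
    rw [← hPe u, hPu, zero_mulVec]
  obtain ⟨u, hu⟩ := LinearMap.injective_iff_surjective.mp hL_inj f
  exact ⟨u, by rw [← mul_conj_mul_eq_self_of_mul_eq_one hGH (P u), ← hL, hu]⟩

end Matrix

theorem haar_sg_closed_form_root_general {n : ℕ} [NeZero n]
    (M : Fin n → Matrix (Fin n) (Fin n) ℝ)
    (hM0 : M 0 = 1)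
    (P : (Fin n → ℝ) → Matrix (Fin n) (Fin n) ℝ)
    (hP : ∀ uh, P uh = ∑ k, uh k • M k)
    (hsym : ∀ uh wh : Fin n → ℝ, (P uh).mulVec wh = (P wh).mulVec uh)
    (e0 : Fin n → ℝ) (he0 : e0 = Pi.single 0 1)
    (H : Matrix (Fin n) (Fin n) ℝ) (hH : Hᵀ * H = 1)
    (hdiag : ∀ k, (Hᵀ * M k * H).IsDiag)
    (m : ℕ) (hm : 1 ≤ m)
    (ρ : Fin n → ℝ) (hρ : (P ρ).PosSemidef)
    (uh : Fin n → ℝ)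
    (huh : uh = (H * Matrix.diagonal
        (fun i => ((Hᵀ * P ρ * H) i i) ^ ((m : ℝ)⁻¹)) * Hᵀ).mulVec e0) :
    (P uh).PosSemidef ∧ (P uh ^ m).mulVec e0 = ρ := by
  obtain rfl : P = Fintype.linearCombination ℝ M :=
    funext fun u => by rw [hP, Fintype.linearCombination_apply]
  have hPe0 : ∀ u, (Fintype.linearCombination ℝ M u).mulVec e0 = u := fun u => by
    rw [hsym, he0, Fintype.linearCombination_apply_single, hM0, one_smul, one_mulVec]
  set P := Fintype.linearCombination ℝ M
  have hHt : Hᴴ = Hᵀ := conjTranspose_eq_transpose_of_trivial H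
  have hD : (Hᵀ * P ρ * H).PosSemidef := hHt ▸ hρ.conjTranspose_mul_mul_same H
  obtain ⟨u, hu⟩ := exists_apply_eq_conj_diagonal _ e0 hPe0 hH
    (isDiag_conj_linearCombination M hdiag)
    (fun i => (Hᵀ * P ρ * H) i i ^ ((m : ℝ)⁻¹))
  obtain rfl : uh = u := by rw [huh, ← hu, hPe0]
  refine ⟨?_, ?_⟩
  · rw [hu, ← hHt]
    exact (posSemidef_diagonal_iff.mpr fun i => Real.rpow_nonneg hD.diag_nonneg _)
      |>.mul_mul_conjTranspose_same H
  · have hroot : (fun i => (Hᵀ * P ρ * H) i i ^ ((m : ℝ)⁻¹)) ^ m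
        = diag (Hᵀ * P ρ * H) :=
      funext fun i => Real.rpow_inv_natCast_pow hD.diag_nonneg (by omega)
    rw [hu, conj_pow_of_mul_eq_one hH, diagonal_pow, hroot,
      (isDiag_iff_diagonal_diag _).mp (isDiag_conj_linearCombination M hdiag ρ),
      mul_conj_mul_eq_self_of_mul_eq_one hH, hPe0]

/-- Equation (6) in the proof of Lemma 3.1 (closed-form `m`-th root): under the
Haar-type hypotheses, if `ρ ∈ H⁺₀` then `uh := H · D(ρ)^{1/m} · Hᵀ e₀`, formed with
the entrywise nonnegative `m`-th roots of the diagonal of `D(ρ) := Hᵀ P(ρ) H`,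
satisfies `uh ∈ H⁺₀` and `(P uh)^m e₀ = ρ`. -/
theorem haar_sg_closed_form_root {n : ℕ} [NeZero n]
    (M : Fin n → Matrix (Fin n) (Fin n) ℝ)
    (hMsymm : ∀ k, (M k).IsSymm) (hM0 : M 0 = 1)
    (P : (Fin n → ℝ) → Matrix (Fin n) (Fin n) ℝ)
    (hP : ∀ uh, P uh = ∑ k, uh k • M k)
    (hsym : ∀ uh wh : Fin n → ℝ, (P uh).mulVec wh = (P wh).mulVec uh)
    (e0 : Fin n → ℝ) (he0 : e0 = Pi.single 0 1)
    (H : Matrix (Fin n) (Fin n) ℝ) (hH : Hᵀ * H = 1)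
    (hdiag : ∀ k, (Hᵀ * M k * H).IsDiag)
    (m : ℕ) (hm : 1 ≤ m)
    (ρ : Fin n → ℝ) (hρ : (P ρ).PosSemidef)
    (uh : Fin n → ℝ)
    (huh : uh = (H * Matrix.diagonal
        (fun i => ((Hᵀ * P ρ * H) i i) ^ ((m : ℝ)⁻¹)) * Hᵀ).mulVec e0) :
    (P uh).PosSemidef ∧ (P uh ^ m).mulVec e0 = ρ :=
  haar_sg_closed_form_root_general M hM0 P hP hsym e0 he0 H hH hdiag m hm ρ hρ uh huh
end

section
/- Under the Haar-type hypotheses, for every integer m ≥ 1 the polynomial function g(α) := (1/(m+1)) · e₀ᵀ (P(α))^{m+1} e₀ is Fréchet differentiable on Fin n → ℝ with gradient ∇g(α) = (P(α))^m e₀ for every α (i.e., the error term E_{m+1}(α) e₀ of Lemma 2.2 vanishes identically for Haar-type expansions). -/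
open Matrix

/-!
Conjugation by the orthogonal matrix `H` diagonalizes every `P β` at once:
`P β = H * diagonal (λ β) * Hᵀ` with `λ` linear in `β`. With `c := Hᵀ e₀` this turns `g` into
the polynomial `β ↦ (1/(m+1)) ∑ᵢ cᵢ² λᵢ(β)^(m+1)`, whose derivative in the direction `h` is
`∑ᵢ cᵢ² λᵢ(α)^m λᵢ(h) = (P α ^ m e₀) ⬝ᵥ (P h e₀)`; finally `P h e₀ = P e₀ h = h`.
-/

section Conjugation

variable {ι R : Type*} [Fintype ι] [DecidableEq ι] [CommSemiring R] {H : Matrix ι ι R}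

theorem Matrix.conj_diagonal_mulVec (f v : ι → R) :
    (H * diagonal f * Hᵀ) *ᵥ v = H *ᵥ (f * Hᵀ *ᵥ v) := by
  rw [← mulVec_mulVec, ← mulVec_mulVec]
  congr 1
  ext i
  exact mulVec_diagonal f _ i

theorem Matrix.mulVec_dotProduct_mulVec_of_transpose_mul_self (hH : Hᵀ * H = 1) (x y : ι → R) :
    (H *ᵥ x) ⬝ᵥ (H *ᵥ y) = x ⬝ᵥ y := by
  rw [dotProduct_comm, dotProduct_mulVec, ← mulVec_transpose, mulVec_mulVec, hH, one_mulVec,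
    dotProduct_comm]

theorem Matrix.dotProduct_conj_diagonal_mulVec_self (f u : ι → R) :
    u ⬝ᵥ (H * diagonal f * Hᵀ) *ᵥ u = ∑ i, (Hᵀ *ᵥ u) i ^ 2 * f i := by
  rw [conj_diagonal_mulVec, dotProduct_mulVec, ← mulVec_transpose, dotProduct]
  refine Finset.sum_congr rfl fun i _ => ?_
  rw [Pi.mul_apply]
  ring

theorem Matrix.conj_diagonal_mulVec_dotProduct_conj_diagonal_mulVec (hH : Hᵀ * H = 1)
    (f f' u : ι → R) :
    (H * diagonal f * Hᵀ) *ᵥ u ⬝ᵥ (H * diagonal f' * Hᵀ) *ᵥ u =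
      ∑ i, (Hᵀ *ᵥ u) i ^ 2 * (f i * f' i) := by
  rw [conj_diagonal_mulVec, conj_diagonal_mulVec, mulVec_dotProduct_mulVec_of_transpose_mul_self hH,
    dotProduct]
  refine Finset.sum_congr rfl fun i _ => ?_
  rw [Pi.mul_apply, Pi.mul_apply]
  ring

end Conjugation

def Matrix.jointEigenvalues {ι κ R : Type*} [Fintype ι] [Mul R] [AddCommMonoid R]
    (H : Matrix ι ι R) (M : κ → Matrix ι ι R) : Matrix κ ι R :=
  of fun k i => (Hᵀ * M k * H) i i

section OrthogonalConjugation

variable {ι R : Type*} [Fintype ι] [DecidableEq ι] [CommRing R] {H : Matrix ι ι R}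

theorem Matrix.conj_pow_of_transpose_mul_self (hH : Hᵀ * H = 1) (A : Matrix ι ι R) (N : ℕ) :
    (H * A * Hᵀ) ^ N = H * A ^ N * Hᵀ :=
  Units.conj_pow ⟨H, Hᵀ, mul_eq_one_comm.mp hH, hH⟩ A N

theorem Matrix.sum_smul_eq_conj_diagonal {κ : Type*} [Fintype κ] {M : κ → Matrix ι ι R}
    (hH : Hᵀ * H = 1) (hdiag : ∀ k, (Hᵀ * M k * H).IsDiag) (β : κ → R) :
    ∑ k, β k • M k = H * diagonal (β ᵥ* jointEigenvalues H M) * Hᵀ := by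
  have hHH : H * Hᵀ = 1 := mul_eq_one_comm.mp hH
  have hdiagonal : Hᵀ * (∑ k, β k • M k) * H = diagonal (β ᵥ* jointEigenvalues H M) := by
    ext i j
    simp only [Finset.mul_sum, Finset.sum_mul, sum_apply]
    rw [diagonal_apply]
    split_ifs with hij
    · subst hij
      simp [vecMul, dotProduct, jointEigenvalues]
    · simp [hdiag _ hij]
  rw [← hdiagonal, ← mul_assoc, ← mul_assoc, hHH, one_mul, mul_assoc, hHH, mul_one]

end OrthogonalConjugation

theorem hasFDerivAt_inv_succ_mul_sum_mul_pow_succ {E ι : Type*} [NormedAddCommGroup E]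
    [NormedSpace ℝ E] [Fintype ι] (w : ι → ℝ) (ℓ : ι → E →L[ℝ] ℝ) (N : ℕ) (α : E) :
    HasFDerivAt (fun β => 1 / ((N : ℝ) + 1) * ∑ i, w i * ℓ i β ^ (N + 1))
      (∑ i, (w i * ℓ i α ^ N) • ℓ i) α := by
  refine ((HasFDerivAt.fun_sum fun i _ => ((ℓ i).hasFDerivAt.pow (N + 1)).const_mul (w i)).const_mul
    (1 / ((N : ℝ) + 1))).congr_fderiv ?_
  rw [Finset.smul_sum]
  refine Finset.sum_congr rfl fun i _ => ?_
  rw [smul_smul, smul_smul, nsmul_eq_mul, Nat.add_sub_cancel]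
  congr 1
  push_cast
  field_simp

theorem haar_sg_energy_gradient_general {n : ℕ} [NeZero n]
    (M : Fin n → Matrix (Fin n) (Fin n) ℝ)
    (hM0 : M 0 = 1)
    (P : (Fin n → ℝ) → Matrix (Fin n) (Fin n) ℝ)
    (hP : ∀ uh, P uh = ∑ k, uh k • M k)
    (hsym : ∀ uh wh : Fin n → ℝ, (P uh).mulVec wh = (P wh).mulVec uh)
    (e0 : Fin n → ℝ) (he0 : e0 = Pi.single 0 1)
    (H : Matrix (Fin n) (Fin n) ℝ) (hH : Hᵀ * H = 1)
    (hdiag : ∀ k, (Hᵀ * M k * H).IsDiag)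
    (m : ℕ)
    (g : (Fin n → ℝ) → ℝ)
    (hg : ∀ α, g α = (1 / ((m : ℝ) + 1)) * (e0 ⬝ᵥ (P α ^ (m + 1)).mulVec e0)) :
    ∀ α : Fin n → ℝ, DifferentiableAt ℝ g α ∧
      ∀ h : Fin n → ℝ, fderiv ℝ g α h = ((P α ^ m).mulVec e0) ⬝ᵥ h := by
  intro α
  let ℓ : Fin n → (Fin n → ℝ) →L[ℝ] ℝ := fun i =>
    (ContinuousLinearMap.proj i).comp (vecMulLinear (jointEigenvalues H M)).toContinuousLinearMap
  have hℓ (i : Fin n) (β : Fin n → ℝ) : ℓ i β = (β ᵥ* jointEigenvalues H M) i := rfl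
  have hPpow (β : Fin n → ℝ) (N : ℕ) :
      P β ^ N = H * diagonal ((β ᵥ* jointEigenvalues H M) ^ N) * Hᵀ := by
    rw [hP, sum_smul_eq_conj_diagonal hH hdiag, conj_pow_of_transpose_mul_self hH, diagonal_pow]
  have hg_eq : g = fun β => 1 / ((m : ℝ) + 1) * ∑ i, (Hᵀ *ᵥ e0) i ^ 2 * ℓ i β ^ (m + 1) := by
    funext β
    rw [hg, hPpow, dotProduct_conj_diagonal_mulVec_self]
    rfl
  have hPe0 (h : Fin n → ℝ) : P h *ᵥ e0 = h := by
    rw [hsym, hP, he0]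
    simp [hM0]
  have hderiv := hasFDerivAt_inv_succ_mul_sum_mul_pow_succ (fun i => (Hᵀ *ᵥ e0) i ^ 2) ℓ m α
  rw [hg_eq]
  refine ⟨hderiv.differentiableAt, fun h => ?_⟩
  conv_rhs => rw [← hPe0 h, ← pow_one (P h), hPpow, hPpow,
    conj_diagonal_mulVec_dotProduct_conj_diagonal_mulVec hH]
  rw [hderiv.fderiv]
  simp only [_root_.sum_apply, _root_.smul_apply, smul_eq_mul, Pi.pow_apply, pow_one, hℓ, mul_assoc]

/-- For Haar-type expansions the error term `E_{m+1}(α) e₀` of Lemma 2.2 vanishes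
identically: the polynomial function `g(α) := (1/(m+1)) · e₀ᵀ (P α)^{m+1} e₀` is
(Fréchet) differentiable everywhere with gradient `∇g(α) = (P α)^m e₀`. -/
theorem haar_sg_energy_gradient {n : ℕ} [NeZero n]
    (M : Fin n → Matrix (Fin n) (Fin n) ℝ)
    (hMsymm : ∀ k, (M k).IsSymm) (hM0 : M 0 = 1)
    (P : (Fin n → ℝ) → Matrix (Fin n) (Fin n) ℝ)
    (hP : ∀ uh, P uh = ∑ k, uh k • M k)
    (hsym : ∀ uh wh : Fin n → ℝ, (P uh).mulVec wh = (P wh).mulVec uh)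
    (e0 : Fin n → ℝ) (he0 : e0 = Pi.single 0 1)
    (H : Matrix (Fin n) (Fin n) ℝ) (hH : Hᵀ * H = 1)
    (hdiag : ∀ k, (Hᵀ * M k * H).IsDiag)
    (m : ℕ) (hm : 1 ≤ m)
    (g : (Fin n → ℝ) → ℝ)
    (hg : ∀ α, g α = (1 / ((m : ℝ) + 1)) * (e0 ⬝ᵥ (P α ^ (m + 1)).mulVec e0)) :
    ∀ α : Fin n → ℝ, DifferentiableAt ℝ g α ∧
      ∀ h : Fin n → ℝ, fderiv ℝ g α h = ((P α ^ m).mulVec e0) ⬝ᵥ h :=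
  haar_sg_energy_gradient_general M hM0 P hP hsym e0 he0 H hH hdiag m g hg
end
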